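/- Let V be an irreducible weight module for the toroidal Lie algebra with finite-dimensional weight spaces. If z₁ and z₂ are nonzero central operators on V of the same degree m, then z₁ = λ z₂ for some nonzero scalar λ ∈ ℂ. -/

import Mathlib

abbrev OmegaA (n : ℕ) : Type := ((Fin n → ℤ) × Fin n) →₀ ℂ

noncomputable def dAelt (n : ℕ) (r : Fin n → ℤ) : OmegaA n :=
  ∑ i, Finsupp.single (r, i) (r i : ℂ)

noncomputable def dA (n : ℕ) : Submodule ℂ (OmegaA n) :=
  Submodule.span ℂ (Set.range (dAelt n))

abbrev OmegaQuot (n : ℕ) := OmegaA n ⧸ dA n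

noncomputable def Kc (n : ℕ) (u : Fin n → ℂ) (r : Fin n → ℤ) : OmegaQuot n :=
  Submodule.Quotient.mk (∑ i, Finsupp.single (r, i) (u i))

def zc {n : ℕ} (r : Fin n → ℤ) : Fin n → ℂ := fun i => (r i : ℂ)

/-- τ̃ = 𝒢⊗A ⊕ Ω_A/d_A ⊕ D as a vector space. -/
abbrev TorTilde (n : ℕ) (G : Type*) [LieRing G] [LieAlgebra ℂ G] :=
  ((Fin n → ℤ) →₀ G) × OmegaQuot n × (Fin n → ℂ)

section
variable (n : ℕ) (G : Type*) [LieRing G] [LieAlgebra ℂ G]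

noncomputable def gX (r : Fin n → ℤ) (X : G) : TorTilde n G := (Finsupp.single r X, 0, 0)

noncomputable def gK (u : Fin n → ℂ) (r : Fin n → ℤ) : TorTilde n G := (0, Kc n u r, 0)

noncomputable def gd (i : Fin n) : TorTilde n G := (0, 0, Pi.single i 1)

/-- The Cartan subalgebra h̃ = h ⊕ Σ ℂKᵢ ⊕ D of τ̃, as a set of elements. -/
noncomputable def cartSet (H : LieSubalgebra ℂ G) : Set (TorTilde n G) :=
  ((fun X : G => gX n G 0 X) '' (H : Set G)) ∪
    (Set.range fun u : Fin n → ℂ => gK n G u 0) ∪ (Set.range (gd n G))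

/-- The weight space of a weight module attached to a weight χ (a simultaneous
eigenvalue function on the Cartan h̃). -/
noncomputable def wtSp (H : LieSubalgebra ℂ G) {V : Type*} [AddCommGroup V] [Module ℂ V]
    (ρ : TorTilde n G →ₗ[ℂ] Module.End ℂ V) (χ : TorTilde n G → ℂ) : Submodule ℂ V :=
  ⨅ x ∈ cartSet n G H, Module.End.eigenspace (ρ x) (χ x)
end

/-! A central operator `z` of degree `m` satisfies `[ρ x, z] = α(x) z` for the linear form
`α = degreeWeight n G m` on `τ̃`, because it does so on the generators. Hence `ker z` and `range z`
are submodules, so a nonzero `z` is bijective by irreducibility, and `z₁ z₂⁻¹` commutes with the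
whole action. It therefore preserves every weight space; on a nonzero one, which is
finite-dimensional, it has an eigenvalue `λ`, and its `λ`-eigenspace is a nonzero submodule, hence
all of `V`. So `z₁ = λ z₂`, and `λ ≠ 0` because `z₁ ≠ 0`. -/

section Irreducible

variable {K ι V : Type*} [CommRing K] [AddCommGroup V] [Module K V] {ρ : ι → Module.End K V}

def IsIrreducibleFamily (ρ : ι → Module.End K V) : Prop :=
  ∀ U : Submodule K V, (∀ x v, v ∈ U → ρ x v ∈ U) → U = ⊥ ∨ U = ⊤

theorem apply_apply_of_commutator_eq_smul {α : ι → K} {z : Module.End K V}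
    (hz : ∀ x, ρ x ∘ₗ z - z ∘ₗ ρ x = α x • z) (x : ι) (v : V) :
    ρ x (z v) = z (ρ x v + α x • v) := by
  simpa [sub_eq_iff_eq_add, add_comm] using LinearMap.congr_fun (hz x) v

theorem bijective_of_commutator_eq_smul
    (hirr : IsIrreducibleFamily ρ)
    {α : ι → K} {z : Module.End K V} (hz : ∀ x, ρ x ∘ₗ z - z ∘ₗ ρ x = α x • z) (hz0 : z ≠ 0) :
    Function.Bijective z := by
  have hρz := apply_apply_of_commutator_eq_smul hz
  constructor
  · rw [← LinearMap.ker_eq_bot]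
    refine (hirr _ fun x v hv => ?_).resolve_right (mt LinearMap.ker_eq_top.mp hz0)
    rw [LinearMap.mem_ker] at hv ⊢
    simpa [hv] using (hρz x v).symm
  · rw [← LinearMap.range_eq_top]
    refine (hirr _ ?_).resolve_left (mt LinearMap.range_eq_bot.mp hz0)
    rintro x _ ⟨w, rfl⟩
    exact ⟨_, (hρz x w).symm⟩

theorem commute_comp_symm_of_commutator_eq_smul {α : ι → K} {z : Module.End K V}
    (e : V ≃ₗ[K] V) (hz : ∀ x, ρ x ∘ₗ z - z ∘ₗ ρ x = α x • z)
    (he : ∀ x, ρ x ∘ₗ e - e ∘ₗ ρ x = α x • (e : Module.End K V)) (x : ι) :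
    Commute (ρ x) (z ∘ₗ e.symm.toLinearMap) := by
  ext v
  obtain ⟨w, rfl⟩ := e.surjective v
  have hρe : e.symm (ρ x (e w)) = ρ x w + α x • w :=
    e.symm_apply_eq.mpr (apply_apply_of_commutator_eq_smul he x w)
  simp [hρe, apply_apply_of_commutator_eq_smul hz x w]

theorem exists_eq_smul_of_commutator_eq_smul
    (hirr : IsIrreducibleFamily ρ)
    (hschur : ∀ T : Module.End K V, (∀ x, Commute (ρ x) T) → ∃ c : K, T = c • 1)
    {α : ι → K} {z₁ z₂ : Module.End K V} (hz₁ : ∀ x, ρ x ∘ₗ z₁ - z₁ ∘ₗ ρ x = α x • z₁)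
    (hz₂ : ∀ x, ρ x ∘ₗ z₂ - z₂ ∘ₗ ρ x = α x • z₂) (hz₂0 : z₂ ≠ 0) :
    ∃ c : K, z₁ = c • z₂ := by
  let e := LinearEquiv.ofBijective z₂ (bijective_of_commutator_eq_smul hirr hz₂ hz₂0)
  obtain ⟨c, hc⟩ := hschur _ (commute_comp_symm_of_commutator_eq_smul e hz₁ hz₂)
  refine ⟨c, LinearMap.ext fun v => ?_⟩
  simpa [e] using LinearMap.congr_fun hc (z₂ v)

theorem eq_smul_one_of_commute_of_hasEigenvalue
    (hirr : IsIrreducibleFamily ρ)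
    {T : Module.End K V} (hT : ∀ x, Commute (ρ x) T) {c : K} (hc : T.HasEigenvalue c) :
    T = c • 1 := by
  have htop := (hirr (T.eigenspace c) fun x _ hv =>
    Module.End.mapsTo_genEigenspace_of_comm (hT x).symm c 1 hv).resolve_left hc
  ext v
  exact Module.End.mem_eigenspace_iff.mp (htop ▸ Submodule.mem_top)

end Irreducible

theorem Module.End.exists_hasEigenvalue_of_mapsTo {K V : Type*} [Field K] [IsAlgClosed K]
    [AddCommGroup V] [Module K V]
    {T : Module.End K V} {W : Submodule K V} [FiniteDimensional K W] (hW : W ≠ ⊥)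
    (hTW : ∀ v ∈ W, T v ∈ W) : ∃ c, T.HasEigenvalue c := by
  have := Submodule.nontrivial_iff_ne_bot.mpr hW
  obtain ⟨c, hc⟩ := Module.End.exists_eigenvalue (T.restrict hTW)
  refine ⟨c, Module.End.hasEigenvalue_iff.mpr fun hbot => hc ?_⟩
  have := Module.End.eigenspace_restrict_le_eigenspace T hTW c
  rw [hbot, le_bot_iff] at this
  exact Submodule.map_injective_of_injective W.injective_subtype
    (this.trans (Submodule.map_bot _).symm)

section Toroidal

variable {n : ℕ} {G : Type*} [LieRing G] [LieAlgebra ℂ G]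

theorem Kc_pi_single (r : Fin n → ℤ) (i : Fin n) (c : ℂ) :
    Kc n (Pi.single i c) r = Submodule.Quotient.mk (Finsupp.single (r, i) c) := by
  rw [Kc, Fintype.sum_eq_single i fun j hj => by rw [Pi.single_eq_of_ne hj, Finsupp.single_zero],
    Pi.single_eq_same]

theorem TorTilde.linearMap_ext {M : Type*} [AddCommGroup M] [Module ℂ M]
    {f g : TorTilde n G →ₗ[ℂ] M}
    (hX : ∀ r X, f (gX n G r X) = g (gX n G r X)) (hK : ∀ u r, f (gK n G u r) = g (gK n G u r))
    (hd : ∀ i, f (gd n G i) = g (gd n G i)) : f = g := by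
  refine LinearMap.prod_ext (Finsupp.lhom_ext fun r X => hX r X) (LinearMap.prod_ext ?_ ?_)
  · refine Submodule.linearMap_qext _ (Finsupp.lhom_ext fun ⟨r, i⟩ c => ?_)
    simpa [gK, Kc_pi_single] using hK (Pi.single i c) r
  · refine LinearMap.pi_ext fun i c => ?_
    have : ((0, 0, Pi.single i c) : TorTilde n G) = c • gd n G i := by
      simp [gd, ← Pi.single_smul]
    simpa [this] using congrArg (c • ·) (hd i)

end Toroidal

section Central

variable (n : ℕ) (G : Type*) [LieRing G] [LieAlgebra ℂ G]

noncomputable def degreeWeight (m : Fin n → ℤ) : TorTilde n G →ₗ[ℂ] ℂ :=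
  (∑ i, (m i : ℂ) • LinearMap.proj i) ∘ₗ LinearMap.snd ℂ _ _ ∘ₗ LinearMap.snd ℂ _ _

variable {n G}

@[simp]
theorem degreeWeight_gX (m : Fin n → ℤ) (r : Fin n → ℤ) (X : G) :
    degreeWeight n G m (gX n G r X) = 0 := by
  simp [degreeWeight, gX]

@[simp]
theorem degreeWeight_gK (m : Fin n → ℤ) (u : Fin n → ℂ) (r : Fin n → ℤ) :
    degreeWeight n G m (gK n G u r) = 0 := by
  simp [degreeWeight, gK]

@[simp]
theorem degreeWeight_gd (m : Fin n → ℤ) (i : Fin n) : degreeWeight n G m (gd n G i) = m i := by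
  simp [degreeWeight, gd, Pi.single_apply]

theorem commutator_eq_degreeWeight_smul {V : Type*} [AddCommGroup V] [Module ℂ V]
    (ρ : TorTilde n G →ₗ[ℂ] Module.End ℂ V) (m : Fin n → ℤ) (z : V →ₗ[ℂ] V)
    (hzX : ∀ (r : Fin n → ℤ) (X : G), ρ (gX n G r X) ∘ₗ z = z ∘ₗ ρ (gX n G r X))
    (hzK : ∀ (u : Fin n → ℂ) (r : Fin n → ℤ), ρ (gK n G u r) ∘ₗ z = z ∘ₗ ρ (gK n G u r))
    (hzd : ∀ i : Fin n, ρ (gd n G i) ∘ₗ z - z ∘ₗ ρ (gd n G i) = (m i : ℂ) • z)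
    (x : TorTilde n G) :
    ρ x ∘ₗ z - z ∘ₗ ρ x = degreeWeight n G m x • z := by
  suffices (LinearMap.mulRight ℂ z - LinearMap.mulLeft ℂ z) ∘ₗ ρ =
      (degreeWeight n G m).smulRight z from LinearMap.congr_fun this x
  refine TorTilde.linearMap_ext (fun r X => ?_) (fun u r => ?_) (fun i => ?_)
  · simp [Module.End.mul_eq_comp, hzX]
  · simp [Module.End.mul_eq_comp, hzK]
  · simp [Module.End.mul_eq_comp, hzd]

end Central

section WeightSpaces

variable {n : ℕ} {G : Type*} [LieRing G] [LieAlgebra ℂ G] (H : LieSubalgebra ℂ G)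
  {V : Type*} [AddCommGroup V] [Module ℂ V] (ρ : TorTilde n G →ₗ[ℂ] Module.End ℂ V)

theorem mapsTo_wtSp_of_commute {T : Module.End ℂ V} (hT : ∀ x, Commute (ρ x) T)
    (χ : TorTilde n G → ℂ) : ∀ v ∈ wtSp n G H ρ χ, T v ∈ wtSp n G H ρ χ := by
  simp only [wtSp, Submodule.mem_iInf]
  exact fun v hv x hx => Module.End.mapsTo_genEigenspace_of_comm (hT x) (χ x) 1 (hv x hx)

theorem exists_wtSp_ne_bot [Nontrivial V] (hwt : ⨆ χ : TorTilde n G → ℂ, wtSp n G H ρ χ = ⊤) :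
    ∃ χ, wtSp n G H ρ χ ≠ ⊥ := by
  by_contra! h
  simp [h] at hwt

end WeightSpaces

theorem stmt10_general (n : ℕ) (G : Type*) [LieRing G] [LieAlgebra ℂ G]
    (H : LieSubalgebra ℂ G)
    (V : Type*) [AddCommGroup V] [Module ℂ V] [Nontrivial V]
    (ρ : TorTilde n G →ₗ[ℂ] Module.End ℂ V)
    -- V is a weight module with finite-dimensional weight spaces:
    (hwt : ⨆ χ : TorTilde n G → ℂ, wtSp n G H ρ χ = ⊤)
    (hfin : ∀ χ : TorTilde n G → ℂ, FiniteDimensional ℂ (wtSp n G H ρ χ))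
    -- V is irreducible:
    (hirr : ∀ U : Submodule ℂ V, (∀ x v, v ∈ U → ρ x v ∈ U) → U = ⊥ ∨ U = ⊤)
    -- z₁ and z₂ are nonzero central operators of degree m:
    (m : Fin n → ℤ) (z₁ z₂ : V →ₗ[ℂ] V) (hz₁ : z₁ ≠ 0) (hz₂ : z₂ ≠ 0)
    (hz11 : ∀ (r : Fin n → ℤ) (X : G), ρ (gX n G r X) ∘ₗ z₁ = z₁ ∘ₗ ρ (gX n G r X))
    (hz12 : ∀ (u : Fin n → ℂ) (r : Fin n → ℤ), ρ (gK n G u r) ∘ₗ z₁ = z₁ ∘ₗ ρ (gK n G u r))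
    (hz13 : ∀ i : Fin n, ρ (gd n G i) ∘ₗ z₁ - z₁ ∘ₗ ρ (gd n G i) = (m i : ℂ) • z₁)
    (hz21 : ∀ (r : Fin n → ℤ) (X : G), ρ (gX n G r X) ∘ₗ z₂ = z₂ ∘ₗ ρ (gX n G r X))
    (hz22 : ∀ (u : Fin n → ℂ) (r : Fin n → ℤ), ρ (gK n G u r) ∘ₗ z₂ = z₂ ∘ₗ ρ (gK n G u r))
    (hz23 : ∀ i : Fin n, ρ (gd n G i) ∘ₗ z₂ - z₂ ∘ₗ ρ (gd n G i) = (m i : ℂ) • z₂) :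
    -- z₁ is a nonzero scalar multiple of z₂:
    ∃ lam : ℂ, lam ≠ 0 ∧ z₁ = lam • z₂ := by
  have hschur (T : Module.End ℂ V) (hT : ∀ x, Commute (ρ x) T) : ∃ c : ℂ, T = c • 1 := by
    obtain ⟨χ, hχ⟩ := exists_wtSp_ne_bot H ρ hwt
    have := hfin χ
    obtain ⟨c, hc⟩ :=
      Module.End.exists_hasEigenvalue_of_mapsTo hχ (mapsTo_wtSp_of_commute H ρ hT χ)
    exact ⟨c, eq_smul_one_of_commute_of_hasEigenvalue hirr hT hc⟩
  obtain ⟨lam, hlam⟩ := exists_eq_smul_of_commutator_eq_smul hirr hschur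
    (commutator_eq_degreeWeight_smul ρ m z₁ hz11 hz12 hz13)
    (commutator_eq_degreeWeight_smul ρ m z₂ hz21 hz22 hz23) hz₂
  refine ⟨lam, ?_, hlam⟩
  rintro rfl
  exact hz₁ (by simpa using hlam)

theorem stmt10 (n : ℕ) (G : Type*) [LieRing G] [LieAlgebra ℂ G]
    [FiniteDimensional ℂ G] [LieAlgebra.IsSimple ℂ G]
    (H : LieSubalgebra ℂ G) (hH : H.IsCartanSubalgebra)
    (Bf : G →ₗ[ℂ] G →ₗ[ℂ] ℂ) (hBsymm : ∀ X Y, Bf X Y = Bf Y X)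
    (hBinv : ∀ X Y Z, Bf ⁅X, Y⁆ Z = Bf X ⁅Y, Z⁆)
    -- the toroidal Lie bracket on τ̃:
    (br : TorTilde n G →ₗ[ℂ] TorTilde n G →ₗ[ℂ] TorTilde n G)
    (h1 : ∀ (X Y : G) (r s : Fin n → ℤ),
      br (gX n G r X) (gX n G s Y) =
        gX n G (r + s) ⁅X, Y⁆ + Bf X Y • gK n G (zc r) (r + s))
    (h2 : ∀ (ω : OmegaQuot n) (r s : Fin n → ℤ) (X : G) (u : Fin n → ℂ),
      br (0, ω, 0) (gX n G r X) = 0 ∧ br (0, ω, 0) (gK n G u s) = 0)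
    (h3 : ∀ (i : Fin n) (r : Fin n → ℤ) (X : G),
      br (gd n G i) (gX n G r X) = (r i : ℂ) • gX n G r X)
    (h4 : ∀ (i : Fin n) (u : Fin n → ℂ) (r : Fin n → ℤ),
      br (gd n G i) (gK n G u r) = (r i : ℂ) • gK n G u r)
    (h5 : ∀ i j : Fin n, br (gd n G i) (gd n G j) = 0)
    (hskew : ∀ x, br x x = 0)
    (hjac : ∀ x y z, br x (br y z) + br y (br z x) + br z (br x y) = 0)
    -- V is a module for τ̃:
    (V : Type*) [AddCommGroup V] [Module ℂ V] [Nontrivial V]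
    (ρ : TorTilde n G →ₗ[ℂ] Module.End ℂ V)
    (hρ : ∀ x y, ρ (br x y) = ⁅ρ x, ρ y⁆)
    -- V is a weight module with finite-dimensional weight spaces:
    (hwt : ⨆ χ : TorTilde n G → ℂ, wtSp n G H ρ χ = ⊤)
    (hfin : ∀ χ : TorTilde n G → ℂ, FiniteDimensional ℂ (wtSp n G H ρ χ))
    -- V is irreducible:
    (hirr : ∀ U : Submodule ℂ V, (∀ x v, v ∈ U → ρ x v ∈ U) → U = ⊥ ∨ U = ⊤)
    -- z₁ and z₂ are nonzero central operators of degree m: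
    (m : Fin n → ℤ) (z₁ z₂ : V →ₗ[ℂ] V) (hz₁ : z₁ ≠ 0) (hz₂ : z₂ ≠ 0)
    (hz11 : ∀ (r : Fin n → ℤ) (X : G), ρ (gX n G r X) ∘ₗ z₁ = z₁ ∘ₗ ρ (gX n G r X))
    (hz12 : ∀ (u : Fin n → ℂ) (r : Fin n → ℤ), ρ (gK n G u r) ∘ₗ z₁ = z₁ ∘ₗ ρ (gK n G u r))
    (hz13 : ∀ i : Fin n, ρ (gd n G i) ∘ₗ z₁ - z₁ ∘ₗ ρ (gd n G i) = (m i : ℂ) • z₁)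
    (hz21 : ∀ (r : Fin n → ℤ) (X : G), ρ (gX n G r X) ∘ₗ z₂ = z₂ ∘ₗ ρ (gX n G r X))
    (hz22 : ∀ (u : Fin n → ℂ) (r : Fin n → ℤ), ρ (gK n G u r) ∘ₗ z₂ = z₂ ∘ₗ ρ (gK n G u r))
    (hz23 : ∀ i : Fin n, ρ (gd n G i) ∘ₗ z₂ - z₂ ∘ₗ ρ (gd n G i) = (m i : ℂ) • z₂) :
    -- z₁ is a nonzero scalar multiple of z₂:
    ∃ lam : ℂ, lam ≠ 0 ∧ z₁ = lam • z₂ :=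
  stmt10_general n G H V ρ hwt hfin hirr m z₁ z₂ hz₁ hz₂ hz11 hz12 hz13 hz21 hz22 hz23
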